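/- For every real x and every t with 0 ≤ t < 1/2, the series ∑_{k=0}^∞ He_{2k}(x) · t^k / k! converges and ∑_{k=0}^∞ He_{2k}(x) · t^k / k! = (1 + 2t)^{−1/2} · exp( t·x² / (1 + 2t) ). -/

import Mathlib

/-!
Let `u(z) = (1 + 2z)^{-1/2}` and `F(z) = u(z) · exp(x² z / (1 + 2z))`, which is holomorphic on
`|z| < 1/2`. Since `u' = -u³` and the exponent has derivative `x² u⁴`, the recurrence
`He_{n+2} = X² He_n - X He_n' - (n + 1) He_n` shows by induction that
`F⁽ⁿ⁾(z) = u^{2n+1} · exp(x² z / (1 + 2z)) · He_{2n}(x u)`, so `F⁽ⁿ⁾(0) = He_{2n}(x)` and the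
series is the Taylor series of `F` at `0`, which converges on the whole disc.
-/

open Polynomial Complex

namespace Polynomial

theorem derivative_hermite_succ (n : ℕ) :
    derivative (hermite (n + 1)) = ((n + 1 : ℕ) : ℤ[X]) * hermite n := by
  induction n with
  | zero => simp
  | succ n ih =>
    rw [hermite_succ (n + 1), derivative_sub, derivative_mul, derivative_X, one_mul, ih,
      derivative_mul, hermite_succ n]
    simp only [derivative_natCast, zero_mul, zero_add]
    push_cast
    ring

theorem hermite_add_two (n : ℕ) :
    hermite (n + 2) =
      X ^ 2 * hermite n - X * derivative (hermite n) - ((n + 1 : ℕ) : ℤ[X]) * hermite n := by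
  rw [hermite_succ (n + 1), derivative_hermite_succ, hermite_succ n]
  ring

end Polynomial

namespace HermiteEven

noncomputable def invSqrt (z : ℂ) : ℂ := (1 + 2 * z) ^ (-2⁻¹ : ℂ)

noncomputable def genFun (x z : ℂ) : ℂ := invSqrt z * cexp (x ^ 2 * z / (1 + 2 * z))

variable {z : ℂ}

theorem invSqrt_zero : invSqrt 0 = 1 := by
  simp [invSqrt]

theorem invSqrt_mul_self (hz : 1 + 2 * z ≠ 0) : invSqrt z * invSqrt z = (1 + 2 * z)⁻¹ := by
  rw [invSqrt, ← cpow_add _ _ hz, show (-2⁻¹ + -2⁻¹ : ℂ) = (-1 : ℤ) by norm_num, cpow_intCast,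
    zpow_neg_one]

theorem hasDerivAt_one_add_two_mul (z : ℂ) : HasDerivAt (fun z : ℂ => 1 + 2 * z) 2 z := by
  simpa using ((hasDerivAt_id z).const_mul (2 : ℂ)).const_add 1

theorem hasDerivAt_invSqrt (hz : 1 + 2 * z ∈ slitPlane) :
    HasDerivAt invSqrt (-invSqrt z ^ 3) z := by
  have hz0 := slitPlane_ne_zero hz
  refine ((hasDerivAt_one_add_two_mul z).cpow_const (c := (-2⁻¹ : ℂ)) hz).congr_deriv ?_
  rw [show (-2⁻¹ - 1 : ℂ) = -2⁻¹ + (-2⁻¹ + -2⁻¹) by norm_num, cpow_add _ _ hz0,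
    cpow_add _ _ hz0, ← invSqrt]
  ring

theorem hasDerivAt_exponent (x : ℂ) (hz : 1 + 2 * z ≠ 0) :
    HasDerivAt (fun z => x ^ 2 * z / (1 + 2 * z)) (x ^ 2 * invSqrt z ^ 4) z := by
  have hq := ((hasDerivAt_id' z).const_mul (x ^ 2)).div (hasDerivAt_one_add_two_mul z) hz
  refine hq.congr_deriv ?_
  rw [show invSqrt z ^ 4 = (invSqrt z * invSqrt z) ^ 2 by ring, invSqrt_mul_self hz]
  field_simp
  ring

theorem hasDerivAt_invSqrt_pow_mul_exp_mul_aeval (x : ℂ) (P : ℤ[X]) (m : ℕ)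
    (hz : 1 + 2 * z ∈ slitPlane) :
    HasDerivAt
      (fun z => invSqrt z ^ m * cexp (x ^ 2 * z / (1 + 2 * z)) * aeval (x * invSqrt z) P)
      (invSqrt z ^ (m + 2) * cexp (x ^ 2 * z / (1 + 2 * z)) *
        aeval (x * invSqrt z) (X ^ 2 * P - X * derivative P - (m : ℤ[X]) * P)) z := by
  have hu := hasDerivAt_invSqrt hz
  have hpow : HasDerivAt (fun z => invSqrt z ^ m) (-(m * invSqrt z ^ (m + 2))) z := by
    refine (hu.pow m).congr_deriv ?_
    rcases m with _ | m
    · simp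
    · push_cast
      ring
  have hexp := (hasDerivAt_exponent x (slitPlane_ne_zero hz)).cexp
  have hP := (P.hasDerivAt_aeval (x * invSqrt z)).comp z (hu.const_mul x)
  refine ((hpow.mul hexp).mul hP).congr_deriv ?_
  simp only [map_sub, map_mul, map_pow, aeval_X, map_natCast, Function.comp_apply, Pi.mul_apply]
  ring

theorem iteratedDeriv_genFun (x : ℂ) (n : ℕ) (hz : 1 + 2 * z ∈ slitPlane) :
    iteratedDeriv n (genFun x) z =
      invSqrt z ^ (2 * n + 1) * cexp (x ^ 2 * z / (1 + 2 * z)) *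
        aeval (x * invSqrt z) (hermite (2 * n)) := by
  induction n generalizing z with
  | zero => simp [genFun]
  | succ n ih =>
    have hS : IsOpen {z : ℂ | 1 + 2 * z ∈ slitPlane} :=
      isOpen_slitPlane.preimage (by fun_prop)
    have hev : iteratedDeriv n (genFun x) =ᶠ[nhds z] _ :=
      Filter.eventuallyEq_of_mem (hS.mem_nhds hz) fun w hw => ih hw
    rw [iteratedDeriv_succ, hev.deriv_eq,
      (hasDerivAt_invSqrt_pow_mul_exp_mul_aeval x (hermite (2 * n)) (2 * n + 1) hz).deriv,
      ← hermite_add_two]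
    rfl

theorem iteratedDeriv_genFun_zero (x : ℂ) (n : ℕ) :
    iteratedDeriv n (genFun x) 0 = aeval x (hermite (2 * n)) := by
  rw [iteratedDeriv_genFun x n (by simp [slitPlane]), invSqrt_zero]
  simp

theorem one_add_two_mul_mem_slitPlane (hz : ‖z‖ < 1 / 2) : 1 + 2 * z ∈ slitPlane :=
  mem_slitPlane_of_norm_lt_one (by rw [norm_mul, RCLike.norm_ofNat]; linarith)

theorem differentiableAt_genFun (x : ℂ) (hz : 1 + 2 * z ∈ slitPlane) :
    DifferentiableAt ℂ (genFun x) z :=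
  ((hasDerivAt_invSqrt hz).mul
    (hasDerivAt_exponent x (slitPlane_ne_zero hz)).cexp).differentiableAt

theorem hasSum_genFun (x : ℂ) (hz : ‖z‖ < 1 / 2) :
    HasSum (fun k : ℕ => aeval x (hermite (2 * k)) * z ^ k / k.factorial) (genFun x z) := by
  have hdiff : DifferentiableOn ℂ (genFun x) (Metric.ball 0 (1 / 2)) := fun w hw =>
    (differentiableAt_genFun x
      (one_add_two_mul_mem_slitPlane (mem_ball_zero_iff.mp hw))).differentiableWithinAt
  refine (hasSum_taylorSeries_on_ball hdiff (mem_ball_zero_iff.mpr hz)).congr_fun fun k => ?_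
  rw [iteratedDeriv_genFun_zero, sub_zero, smul_eq_mul, smul_eq_mul]
  ring

theorem invSqrt_ofReal {t : ℝ} (ht : 0 ≤ 1 + 2 * t) : invSqrt t = ((√(1 + 2 * t))⁻¹ : ℝ) := by
  rw [invSqrt, Real.sqrt_eq_rpow, ← Real.rpow_neg ht, ofReal_cpow ht]
  push_cast
  norm_num

theorem genFun_ofReal (x : ℝ) {t : ℝ} (ht : 0 ≤ 1 + 2 * t) :
    genFun x t = ((√(1 + 2 * t))⁻¹ * Real.exp (t * x ^ 2 / (1 + 2 * t)) : ℝ) := by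
  rw [genFun, invSqrt_ofReal ht]
  push_cast
  ring_nf

end HermiteEven

open HermiteEven in
theorem hermite_even_generating_function (x t : ℝ) (ht0 : 0 ≤ t) (ht : t < 1 / 2) :
    HasSum (fun k : ℕ =>
        (Polynomial.aeval x (Polynomial.hermite (2 * k))) * t ^ k / (Nat.factorial k))
      ((Real.sqrt (1 + 2 * t))⁻¹ * Real.exp (t * x ^ 2 / (1 + 2 * t))) := by
  have hsum := hasSum_genFun x (z := t) (by rwa [norm_real, Real.norm_of_nonneg ht0])
  rw [genFun_ofReal x (by linarith)] at hsum
  refine hasSum_ofReal.mp (hsum.congr_fun fun k => ?_)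
  push_cast
  rw [← coe_algebraMap, aeval_algebraMap_apply]
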